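/- arXiv:2503.18474 — 5 statements merged into one kernel-verified Lean document; each statement's English description precedes it below -/
import Mathlib

section
/- Let G be a directed graph and let P be a directed path p₀, …, p_{n-1} in G. For indices j < i, call the pair (i,j) a detour if (1) there is a walk in G from p_i to p_j that avoids all vertices p_k with k < j, and (2) there is no i' > i for which a walk from p_{i'} to p_j avoiding all vertices p_k with k < j exists. Let H be the directed graph on the index set {0, …, n-1} whose edges are k → k+1 for all k < n-1 together with an edge i → j for every detour (i,j). Then for all indices f < b the following holds: letting S_G be the set of indices q > f such that there is a walk in G from p_b to p_q avoiding all vertices p_k with k ≤ f, and S_H the set of indices q > f such that there is a walk in H from b to q avoiding all indices k ≤ f, one has S_H ⊆ S_G, S_G is nonempty if and only if S_H is nonempty, and when they are nonempty they have the same least element. -/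
/-- A walk in the directed graph with edge relation `E`: a nonempty list of vertices
starting at `u`, ending at `v`, with every consecutive pair an edge. -/
def IsWalk {V : Type*} (E : V → V → Prop) (l : List V) (u v : V) : Prop :=
  l ≠ [] ∧ l.head? = some u ∧ l.getLast? = some v ∧ l.Chain' E

/-- For indices `j < i` of the directed path `p`, `(i,j)` is a detour if there is a walk
in `G` from `p i` to `p j` avoiding all vertices `p k` with `k < j`, and no `i' > i`
admits such a walk. -/
def Detour {V : Type*} {n : ℕ} (E : V → V → Prop) (p : Fin n → V) (i j : Fin n) : Prop :=
  j < i ∧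
  (∃ l, IsWalk E l (p i) (p j) ∧ ∀ x ∈ l, ∀ k : Fin n, k < j → x ≠ p k) ∧
  ∀ i' : Fin n, i < i' →
    ¬ ∃ l, IsWalk E l (p i') (p j) ∧ ∀ x ∈ l, ∀ k : Fin n, k < j → x ≠ p k

/-- The auxiliary graph `H` on the index set `{0, …, n-1}`: edges `k → k+1` for all
`k < n-1`, together with an edge `i → j` for every detour `(i,j)`. -/
def Hrel {V : Type*} {n : ℕ} (E : V → V → Prop) (p : Fin n → V) (a b : Fin n) : Prop :=
  (a.val + 1 = b.val) ∨ Detour E p a b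

/-!
An `H`-edge `a → c` is realised in `G` by a walk from `p a` to `p c` avoiding every `p k` with
`k < c`: a single path edge, or the walk witnessing the detour. Hence walks in `H` above `f`
lift to walks in `G` avoiding `p 0, …, p f`, so `S_H ⊆ S_G`, and `b` lies in both sets.
Conversely, let `m < b` be least in `S_G`. By minimality the `G`-walk from `p b` to `p m` meets
no `p k` with `k < m`, so there is a largest `i ≥ b` from which `p m` is reachable avoiding
these vertices, and `(i, m)` is a detour. In `H`, `b` reaches `i` along path edges and then `m`.
-/

open Relation

section ReachWithin

variable {α : Type*} {r : α → α → Prop} {P Q : α → Prop} {u v w : α}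

def ReachWithin (r : α → α → Prop) (P : α → Prop) (u v : α) : Prop :=
  P u ∧ ReflTransGen (fun a c => r a c ∧ P c) u v

lemma ReachWithin.refl (hu : P u) : ReachWithin r P u u := ⟨hu, .refl⟩

lemma ReachWithin.tail (h : ReachWithin r P u v) (hr : r v w) (hw : P w) :
    ReachWithin r P u w :=
  ⟨h.1, h.2.tail ⟨hr, hw⟩⟩

lemma ReachWithin.target (h : ReachWithin r P u v) : P v := by
  obtain ⟨hu, h⟩ := h
  rcases h.cases_tail with rfl | ⟨_, _, _, hv⟩
  exacts [hu, hv]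

lemma ReachWithin.restrict (h : ReachWithin r P u v) (hQ : ∀ w, ReachWithin r P u w → Q w) :
    ReachWithin r Q u v := by
  obtain ⟨hu, h⟩ := h
  induction h with
  | refl => exact .refl (hQ u (.refl hu))
  | tail hw hs ih => exact ih.tail hs.1 (hQ _ ⟨hu, hw.tail hs⟩)

lemma exists_isWalk_forall_iff {E : α → α → Prop} :
    (∃ l, IsWalk E l u v ∧ ∀ x ∈ l, P x) ↔ ReachWithin E P u v := by
  constructor
  · rintro ⟨_ | ⟨a, t⟩, ⟨hne, hhd, hlast, hch⟩, hP⟩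
    · exact absurd rfl hne
    obtain rfl : a = u := by simpa using hhd
    refine ⟨hP a List.mem_cons_self, List.relationReflTransGen_of_exists_isChain_cons t ?_ ?_⟩
    · exact hch.imp_of_mem_imp fun _ c _ hc hac => ⟨hac, hP c hc⟩
    · simpa [List.getLast?_eq_some_getLast (List.cons_ne_nil a t)] using hlast
  · rintro ⟨hu, h⟩
    obtain ⟨t, hch, hlast⟩ := List.exists_isChain_cons_of_relationReflTransGen h
    refine ⟨u :: t, ⟨List.cons_ne_nil u t, rfl, ?_, hch.imp fun _ _ h => h.1⟩, ?_⟩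
    · rw [List.getLast?_eq_some_getLast (List.cons_ne_nil u t), hlast]
    · rintro x (_ | ⟨_, hx⟩)
      exacts [hu, hch.cons_induction P t (fun _ _ h _ => h.2) hu x hx]

end ReachWithin

lemma isLeast_iff_of_subset {α : Type*} [LinearOrder α] [WellFoundedLT α] {S T : Set α}
    (hTS : T ⊆ S) (hleast : ∀ m, IsLeast S m → m ∈ T) (q : α) :
    IsLeast S q ↔ IsLeast T q := by
  refine ⟨fun hq => ⟨hleast q hq, fun _ ht => hq.2 (hTS ht)⟩, fun hq => ?_⟩
  obtain ⟨m, hmS, hmin⟩ := wellFounded_lt.has_min S ⟨q, hTS hq.1⟩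
  have hm : IsLeast S m := ⟨hmS, fun s hs => not_lt.1 (hmin s hs)⟩
  rwa [hq.unique ⟨hleast m hm, fun _ ht => hm.2 (hTS ht)⟩]

section DirectedPath

variable {V : Type*} {n : ℕ} {E : V → V → Prop} {p : Fin n → V}

lemma Hrel.reflTransGen (hinj : Function.Injective p)
    (hch : ∀ (i : ℕ) (h : i + 1 < n), E (p ⟨i, Nat.lt_of_succ_lt h⟩) (p ⟨i + 1, h⟩))
    {a c : Fin n} (h : Hrel E p a c) :
    ReflTransGen (fun x y => E x y ∧ ∀ k, k < c → y ≠ p k) (p a) (p c) := by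
  rcases h with hsucc | ⟨-, hwalk, -⟩
  · rw [show c = ⟨a + 1, hsucc ▸ c.isLt⟩ from Fin.ext hsucc.symm]
    exact .single ⟨hch a _, fun k hk => hinj.ne hk.ne'⟩
  · exact (exists_isWalk_forall_iff.1 hwalk).2

lemma ReachWithin.of_hrel (hinj : Function.Injective p)
    (hch : ∀ (i : ℕ) (h : i + 1 < n), E (p ⟨i, Nat.lt_of_succ_lt h⟩) (p ⟨i + 1, h⟩))
    {f a c : Fin n} (h : ReachWithin (Hrel E p) (fun x => ¬ x ≤ f) a c) :
    ReachWithin E (fun x => ∀ k, k ≤ f → x ≠ p k) (p a) (p c) := by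
  refine ⟨fun k hk => hinj.ne (hk.trans_lt (not_le.1 h.1)).ne', h.2.lift' p ?_⟩
  rintro x y ⟨hxy, hy⟩
  exact ReflTransGen.mono (fun _ _ h => ⟨h.1, fun k hk => h.2 k (hk.trans_lt (not_le.1 hy))⟩)
    _ _ (Hrel.reflTransGen hinj hch hxy)

lemma reachWithin_hrel_of_le {P : Fin n → Prop} {a c : Fin n} (hac : a ≤ c)
    (hP : ∀ i, a ≤ i → i ≤ c → P i) : ReachWithin (Hrel E p) P a c := by
  refine ⟨hP a le_rfl hac, reflTransGen_of_succ_of_le _ (fun i hi => ⟨Or.inl ?_, ?_⟩) hac⟩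
  · have := Order.covBy_succ_of_not_isMax (not_isMax_of_lt hi.2)
    exact Nat.covBy_iff_add_one_eq.1 (Fin.covBy_iff.1 this)
  · exact hP _ (hi.1.trans (Order.le_succ i)) (Order.succ_le_of_lt hi.2)

lemma exists_detour {m b : Fin n} (hmb : m < b)
    (h : ReachWithin E (fun x => ∀ k, k < m → x ≠ p k) (p b) (p m)) :
    ∃ i, b ≤ i ∧ Detour E p i m := by
  obtain ⟨i, hi, hmax⟩ := Set.exists_max_image
    {i | ReachWithin E (fun x => ∀ k, k < m → x ≠ p k) (p i) (p m)} id (Set.toFinite _) ⟨b, h⟩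
  refine ⟨i, hmax b h, hmb.trans_le (hmax b h), exists_isWalk_forall_iff.2 hi, ?_⟩
  exact fun i' hi' hwalk => (hmax i' (exists_isWalk_forall_iff.1 hwalk)).not_gt hi'

lemma ReachWithin.avoid_lt_of_minimal {f b m : Fin n}
    (hm : ReachWithin E (fun x => ∀ k, k ≤ f → x ≠ p k) (p b) (p m))
    (hmin : ∀ q, f < q → ReachWithin E (fun x => ∀ k, k ≤ f → x ≠ p k) (p b) (p q) → m ≤ q) :
    ReachWithin E (fun x => ∀ k, k < m → x ≠ p k) (p b) (p m) := by
  refine hm.restrict fun w hw k hkm hwk => ?_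
  subst hwk
  rcases le_or_gt k f with hkf | hfk
  · exact hw.target k hkf rfl
  · exact (hmin k hfk hw).not_gt hkm

end DirectedPath

theorem stmt_2_general {V : Type*} {n : ℕ} (E : V → V → Prop)
    (p : Fin n → V) (hinj : Function.Injective p)
    (hch : ∀ (i : ℕ) (h : i + 1 < n),
      E (p ⟨i, Nat.lt_of_succ_lt h⟩) (p ⟨i + 1, h⟩))
    (f b : Fin n) (hfb : f < b) :
    let SG : Set (Fin n) := {q | f < q ∧
      ∃ l, IsWalk E l (p b) (p q) ∧ ∀ x ∈ l, ∀ k : Fin n, k ≤ f → x ≠ p k}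
    let SH : Set (Fin n) := {q | f < q ∧
      ∃ l, IsWalk (Hrel E p) l b q ∧ ∀ x ∈ l, ¬ x ≤ f}
    SH ⊆ SG ∧ (SG.Nonempty ↔ SH.Nonempty) ∧ ∀ q, IsLeast SG q ↔ IsLeast SH q := by
  intro SG SH
  have hsub : SH ⊆ SG := fun q ⟨hq, h⟩ =>
    ⟨hq, exists_isWalk_forall_iff.2 ((exists_isWalk_forall_iff.1 h).of_hrel hinj hch)⟩
  have hb : b ∈ SH := ⟨hfb, exists_isWalk_forall_iff.2 (.refl (not_le.2 hfb))⟩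
  have hleast : ∀ m, IsLeast SG m → m ∈ SH := by
    rintro m ⟨⟨hfm, hreach⟩, hmin⟩
    rcases (hmin (hsub hb)).eq_or_lt with rfl | hmb
    · exact hb
    have hreach_lt := (exists_isWalk_forall_iff.1 hreach).avoid_lt_of_minimal
      fun q hq hr => hmin ⟨hq, exists_isWalk_forall_iff.2 hr⟩
    obtain ⟨i, hbi, hdet⟩ := exists_detour hmb hreach_lt
    have hpath : ReachWithin (Hrel E p) (fun x => ¬ x ≤ f) b i :=
      reachWithin_hrel_of_le hbi fun x hx _ => not_le.2 (hfb.trans_le hx)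
    exact ⟨hfm, exists_isWalk_forall_iff.2 (hpath.tail (Or.inr hdet) (not_le.2 hfm))⟩
  exact ⟨hsub, ⟨fun _ => ⟨b, hb⟩, fun _ => ⟨b, hsub hb⟩⟩, isLeast_iff_of_subset hsub hleast⟩

/-- For all indices `f < b`, the set of indices `q > f` reachable from `b`
in `H` avoiding indices `≤ f` is contained in the set of indices `q > f` whose vertex is
reachable from `p b` in `G` avoiding the vertices `p k` with `k ≤ f`; the two sets are
simultaneously nonempty, and have the same least element when nonempty. -/
theorem stmt_2 {V : Type*} [Fintype V] {n : ℕ} (E : V → V → Prop)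
    (p : Fin n → V) (hinj : Function.Injective p)
    (hch : ∀ (i : ℕ) (h : i + 1 < n),
      E (p ⟨i, Nat.lt_of_succ_lt h⟩) (p ⟨i + 1, h⟩))
    (f b : Fin n) (hfb : f < b) :
    let SG : Set (Fin n) := {q | f < q ∧
      ∃ l, IsWalk E l (p b) (p q) ∧ ∀ x ∈ l, ∀ k : Fin n, k ≤ f → x ≠ p k}
    let SH : Set (Fin n) := {q | f < q ∧
      ∃ l, IsWalk (Hrel E p) l b q ∧ ∀ x ∈ l, ¬ x ≤ f}
    SH ⊆ SG ∧ (SG.Nonempty ↔ SH.Nonempty) ∧ ∀ q, IsLeast SG q ↔ IsLeast SH q :=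
  stmt_2_general E p hinj hch f b hfb
end

section
/- Let G be a directed graph and let P be a directed path p₀, …, p_{n-1} in G. For indices j < i, call the pair (i,j) a detour if (1) there is a walk in G from p_i to p_j that avoids all vertices p_k with k < j, and (2) there is no i' > i for which a walk from p_{i'} to p_j avoiding all vertices p_k with k < j exists. Then detours do not cross: there are no two detours (u,v) and (w,x) with v < x < u < w. -/
namespace IsWalk

variable {V : Type*} {E : V → V → Prop}

theorem singleton (a : V) : IsWalk E [a] a a :=
  ⟨by simp, rfl, rfl, List.isChain_singleton a⟩

theorem pair {a b : V} (h : E a b) : IsWalk E [a, b] a b :=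
  ⟨by simp, rfl, rfl, List.isChain_pair.2 h⟩

theorem append {l₁ l₂ : List V} {a b c : V} (h₁ : IsWalk E l₁ a b) (h₂ : IsWalk E l₂ b c) :
    IsWalk E (l₁ ++ l₂.tail) a c := by
  obtain ⟨hne₁, hhead₁, hlast₁, hchain₁⟩ := h₁
  obtain ⟨hne₂, hhead₂, hlast₂, hchain₂⟩ := h₂
  obtain ⟨b', t, rfl⟩ := List.exists_cons_of_ne_nil hne₂
  obtain rfl : b' = b := by simpa using hhead₂
  rw [List.Chain', List.isChain_cons] at hchain₂
  refine ⟨by simp [hne₁], by simp [List.head?_append, hhead₁], ?_, ?_⟩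
  · rcases eq_or_ne t [] with rfl | ht
    · simpa [hlast₁] using hlast₂
    · rw [List.tail_cons, List.getLast?_append_of_ne_nil _ ht]
      rwa [← List.singleton_append, List.getLast?_append_of_ne_nil _ ht] at hlast₂
  · refine List.IsChain.append hchain₁ hchain₂.2 ?_
    intro x hx y hy
    obtain rfl : b' = x := by simpa [hlast₁] using hx
    exact hchain₂.1 y hy

end IsWalk

def WalkWithin {V : Type*} (E : V → V → Prop) (P : V → Prop) (a b : V) : Prop :=
  ∃ l, IsWalk E l a b ∧ ∀ y ∈ l, P y

namespace WalkWithin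

variable {V : Type*} {E : V → V → Prop} {P Q : V → Prop} {a b c : V}

theorem of_edge (h : E a b) (ha : P a) (hb : P b) : WalkWithin E P a b :=
  ⟨[a, b], IsWalk.pair h, by simp [ha, hb]⟩

theorem trans (h₁ : WalkWithin E P a b) (h₂ : WalkWithin E P b c) : WalkWithin E P a c := by
  obtain ⟨l₁, hl₁, hP₁⟩ := h₁
  obtain ⟨l₂, hl₂, hP₂⟩ := h₂
  refine ⟨l₁ ++ l₂.tail, hl₁.append hl₂, fun y hy => ?_⟩
  rcases List.mem_append.1 hy with hy | hy
  exacts [hP₁ y hy, hP₂ y (List.mem_of_mem_tail hy)]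

theorem mono (h : WalkWithin E P a b) (hPQ : ∀ y, P y → Q y) : WalkWithin E Q a b :=
  let ⟨l, hl, hP⟩ := h
  ⟨l, hl, fun y hy => hPQ y (hP y hy)⟩

end WalkWithin

theorem walkWithin_of_path {V : Type*} {n : ℕ} {E : V → V → Prop} {p : Fin n → V}
    (hch : ∀ (i : ℕ) (h : i + 1 < n), E (p ⟨i, Nat.lt_of_succ_lt h⟩) (p ⟨i + 1, h⟩))
    {a b : Fin n} (hab : a ≤ b) :
    WalkWithin E (fun y => ∃ m, a ≤ m ∧ y = p m) (p a) (p b) := by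
  suffices ∀ k (hk : a.val + k < n), WalkWithin E (fun y => ∃ m, a ≤ m ∧ y = p m)
      (p a) (p ⟨a.val + k, hk⟩) by
    simpa [Nat.add_sub_of_le (Fin.le_def.1 hab)] using this (b.val - a.val) (by omega)
  intro k
  induction k with
  | zero =>
    exact fun _ => ⟨[p a], IsWalk.singleton _, fun y hy => ⟨a, le_rfl, by simpa using hy⟩⟩
  | succ k ih =>
    intro hk
    refine (ih (by omega)).trans (.of_edge (hch (a.val + k) hk) ⟨_, ?_, rfl⟩ ⟨_, ?_, rfl⟩)
    all_goals simp [Fin.le_def]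

theorem stmt_3_general {V : Type*} {n : ℕ} (E : V → V → Prop)
    (p : Fin n → V) (hinj : Function.Injective p)
    (hch : ∀ (i : ℕ) (h : i + 1 < n),
      E (p ⟨i, Nat.lt_of_succ_lt h⟩) (p ⟨i + 1, h⟩)) :
    ¬ ∃ u v w x : Fin n, Detour E p u v ∧ Detour E p w x ∧ v < x ∧ x < u ∧ u < w := by
  rintro ⟨u, v, w, x, ⟨-, hwalk_uv, hmax⟩, ⟨-, hwalk_wx, -⟩, hvx, hxu, huw⟩
  have hwalk_xu : WalkWithin E (fun y => ∀ k, k < v → y ≠ p k) (p x) (p u) :=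
    (walkWithin_of_path hch hxu.le).mono fun _ ⟨m, hxm, hy⟩ k hkv hyk =>
      (hkv.trans (hvx.trans_le hxm)).ne (hinj (hyk.symm.trans hy))
  have hwalk_wx' : WalkWithin E (fun y => ∀ k, k < v → y ≠ p k) (p w) (p x) :=
    WalkWithin.mono hwalk_wx fun _ hy k hkv => hy k (hkv.trans hvx)
  exact hmax w huw ((hwalk_wx'.trans hwalk_xu).trans hwalk_uv)

/-- Detours do not cross: there are no two detours `(u,v)` and `(w,x)`
with `v < x < u < w`. -/
theorem stmt_3 {V : Type*} [Fintype V] {n : ℕ} (E : V → V → Prop)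
    (p : Fin n → V) (hinj : Function.Injective p)
    (hch : ∀ (i : ℕ) (h : i + 1 < n),
      E (p ⟨i, Nat.lt_of_succ_lt h⟩) (p ⟨i + 1, h⟩)) :
    ¬ ∃ u v w x : Fin n, Detour E p u v ∧ Detour E p w x ∧ v < x ∧ x < u ∧ u < w :=
  stmt_3_general E p hinj hch
end

section
/- Let G be a directed graph containing directed paths P' and P. Suppose u and u' are vertices of P' such that first_G(u,P) and first_G(u',P) both exist and are distinct vertices of P. Then every walk in G from u to first_G(u,P) is vertex-disjoint from every walk in G from u' to first_G(u',P). -/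
/-- `v` is reachable from `u` in the graph with edge relation `E`. -/
def Reach {V : Type*} (E : V → V → Prop) (u v : V) : Prop :=
  ∃ l : List V, IsWalk E l u v

/-- `b` is the `≤_P`-least vertex of the directed path (list) `p` reachable from `s`. -/
def IsFirst {V : Type*} [DecidableEq V] (E : V → V → Prop) (s : V) (p : List V)
    (b : V) : Prop :=
  b ∈ p ∧ Reach E s b ∧ ∀ c ∈ p, Reach E s c → p.idxOf b ≤ p.idxOf c

/- A walk can be split at any of its vertices and walks can be concatenated, so a common vertex
`x` of the two walks makes `first(u')` reachable from `u` and `first(u)` reachable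
from `u'`; minimality of both firsts forces them to have the same index on `P`, hence to coincide. -/

section

variable {V : Type*} {E : V → V → Prop}

theorem reach_iff_reflTransGen {u v : V} : Reach E u v ↔ Relation.ReflTransGen E u v := by
  constructor
  · rintro ⟨l, hne, hhead, hlast, hchain⟩
    rw [List.head?_eq_some_head hne, Option.some_inj] at hhead
    rw [List.getLast?_eq_some_getLast hne, Option.some_inj] at hlast
    exact hhead ▸ hlast ▸ List.relationReflTransGen_of_exists_isChain l hchain hne
  · intro h
    obtain ⟨l, hne, hchain, hhead, hlast⟩ := List.exists_isChain_ne_nil_of_relationReflTransGen h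
    exact ⟨l, hne, by rw [List.head?_eq_some_head hne, hhead],
      by rw [List.getLast?_eq_some_getLast hne, hlast], hchain⟩

theorem Reach.trans {u v w : V} (huv : Reach E u v) (hvw : Reach E v w) : Reach E u w :=
  reach_iff_reflTransGen.mpr
    ((reach_iff_reflTransGen.mp huv).trans (reach_iff_reflTransGen.mp hvw))

theorem IsWalk.reach_of_mem {l : List V} {u v x : V} (hl : IsWalk E l u v) (hx : x ∈ l) :
    Reach E u x ∧ Reach E x v := by
  obtain ⟨hne, hhead, hlast, hchain⟩ := hl
  obtain ⟨l₁, l₂, rfl⟩ := List.append_of_mem hx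
  obtain ⟨hchain₁, hchain₂⟩ := List.isChain_split.mp hchain
  refine ⟨⟨l₁ ++ [x], by simp, ?_, by simp, hchain₁⟩, ⟨x :: l₂, by simp, rfl, ?_, hchain₂⟩⟩
  · cases l₁ <;> simpa using hhead
  · simpa [List.getLast?_append] using hlast

theorem IsFirst.eq_of_reach [DecidableEq V] {p : List V} {s s' b b' : V}
    (hb : IsFirst E s p b) (hb' : IsFirst E s' p b') (hsb' : Reach E s b') (hs'b : Reach E s' b) :
    b = b' :=
  (List.idxOf_inj hb.1).mp (le_antisymm (hb.2.2 b' hb'.1 hsb') (hb'.2.2 b hb.1 hs'b))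

end

theorem stmt_4_general {V : Type*} [DecidableEq V] (E : V → V → Prop)
    (p : List V)
    (u u' fu fu' : V)
    (h1 : IsFirst E u p fu) (h2 : IsFirst E u' p fu') (hne : fu ≠ fu')
    (l l' : List V) (hl : IsWalk E l u fu) (hl' : IsWalk E l' u' fu') :
    ∀ x ∈ l, x ∉ l' := by
  intro x hx hx'
  obtain ⟨hux, hxfu⟩ := hl.reach_of_mem hx
  obtain ⟨hu'x, hxfu'⟩ := hl'.reach_of_mem hx'
  exact hne (h1.eq_of_reach h2 (hux.trans hxfu') (hu'x.trans hxfu))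

/-- If `u, u'` are vertices of `P'` whose firsts on `P` exist and are
distinct, then every walk from `u` to `first_G(u,P)` is vertex-disjoint from every walk
from `u'` to `first_G(u',P)`. -/
theorem stmt_4 {V : Type*} [Fintype V] [DecidableEq V] (E : V → V → Prop)
    (p' p : List V) (hp'nd : p'.Nodup) (hp'ch : p'.Chain' E)
    (hpnd : p.Nodup) (hpch : p.Chain' E)
    (u u' fu fu' : V) (hu : u ∈ p') (hu' : u' ∈ p')
    (h1 : IsFirst E u p fu) (h2 : IsFirst E u' p fu') (hne : fu ≠ fu')
    (l l' : List V) (hl : IsWalk E l u fu) (hl' : IsWalk E l' u' fu') :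
    ∀ x ∈ l, x ∉ l' :=
  stmt_4_general E p u u' fu fu' h1 h2 hne l l' hl hl'
end

section
/- Let G' be a finite directed graph with nonnegative edge weights containing a directed path P₂ of total length 0 and a sequence P₁ of distinct vertices disjoint from P₂ equipped with a linear order ≤_{P₁}, such that no vertex of P₁ has an outgoing edge in G' and every edge of G' whose head lies on P₂ is an edge of P₂. Let β > 0. For a vertex v of P₂ write v_f = dfirst_{G'}(v,P₁,β) when it exists, and let B be the set of pairs (v, v_f) with v on P₂ and v_f defined such that there is no vertex u of P₂ with v <_{P₂} u, u_f defined, and u_f ≤_{P₁} v_f (the maximal pairs). Then for every vertex b of P₂ for which b_f is defined, there exists a pair (u, u_f) ∈ B with b ≤_{P₂} u and u_f = b_f; consequently there is a walk of length at most β from b to b_f consisting of the subpath P₂[b,u] followed by a walk from u to u_f of length at most β. -/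
/-- The length of a walk: the sum of the weights of its consecutive pairs. -/
def walkLen {V : Type*} (w : V → V → ℝ) (l : List V) : ℝ :=
  ((l.zip l.tail).map fun q => w q.1 q.2).sum

/-- `b` is `dfirst_G(v,Q,β)`: the `≤_Q`-least vertex of the ordered vertex list `q`
reachable from `v` by a walk of length at most `β`. -/
def IsDFirst {V : Type*} [DecidableEq V] (E : V → V → Prop) (w : V → V → ℝ)
    (v : V) (q : List V) (β : ℝ) (b : V) : Prop :=
  b ∈ q ∧ (∃ l, IsWalk E l v b ∧ walkLen w l ≤ β) ∧
    ∀ c ∈ q, (∃ l, IsWalk E l v c ∧ walkLen w l ≤ β) → q.idxOf b ≤ q.idxOf c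

/-- `(v, vf)` is a maximal pair: `vf = dfirst(v,P₁,β)` and there is no `u` strictly
later than `v` on `P₂` with `u_f` defined and `u_f ≤_{P₁} vf`. -/
def MaximalPair {V : Type*} [DecidableEq V] (E : V → V → Prop) (w : V → V → ℝ)
    (p₂ p₁ : List V) (β : ℝ) (v vf : V) : Prop :=
  v ∈ p₂ ∧ IsDFirst E w v p₁ β vf ∧
    ¬ ∃ u uf, u ∈ p₂ ∧ p₂.idxOf v < p₂.idxOf u ∧
      IsDFirst E w u p₁ β uf ∧ p₁.idxOf uf ≤ p₁.idxOf vf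

/-! Let `u` be the furthest vertex of `P₂`, at or after `b`, whose `dfirst` comes no later
than `b_f` in `P₁`. Since `P₂` has length zero, prepending `P₂[b,u]` to a walk from `u` gives
a walk from `b` of the same length, so `u_f` is a candidate for `b_f` and hence equals it; the
choice of `u` as furthest is exactly the maximality condition. -/

section Walks

variable {V : Type*} {E : V → V → Prop} {w : V → V → ℝ}

lemma walkLen_cons_cons (x y : V) (t : List V) :
    walkLen w (x :: y :: t) = w x y + walkLen w (y :: t) := by
  simp [walkLen]

lemma IsWalk.cons {l : List V} {a c x : V} (hl : IsWalk E l a c) (hx : E x a) :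
    IsWalk E (x :: l) x c ∧ walkLen w (x :: l) = w x a + walkLen w l := by
  obtain ⟨hne, hhd, hlast, hch⟩ := hl
  obtain ⟨y, t, rfl⟩ := List.exists_cons_of_ne_nil hne
  obtain rfl : y = a := by simpa using hhd
  exact ⟨⟨List.cons_ne_nil _ _, rfl, by rwa [List.getLast?_cons_cons],
    List.isChain_cons_cons.mpr ⟨hx, hch⟩⟩, walkLen_cons_cons x _ t⟩

lemma weight_eq_zero_of_walkLen_eq_zero (hw : ∀ x y, 0 ≤ w x y) {p : List V}
    (hp : walkLen w p = 0) (i : ℕ) (hi : i + 1 < p.length) :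
    w (p[i]'(by omega)) p[i + 1] = 0 := by
  have hi' : i < (p.zip p.tail).length := by
    simp only [List.length_zip, List.length_tail]; omega
  refine List.all_zero_of_le_zero_le_of_sum_eq_zero ?_ hp
    (List.mem_map.mpr ⟨(p.zip p.tail)[i], List.getElem_mem hi', by simp⟩)
  simp only [List.mem_map]
  rintro _ ⟨q, -, rfl⟩
  exact hw _ _

lemma IsWalk.segment_append {p : List V} (hch : p.IsChain E)
    (hzero : ∀ i (hi : i + 1 < p.length), w (p[i]'(by omega)) p[i + 1] = 0)
    {l : List V} {c : V} (d : ℕ) :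
    ∀ i (hd : i + d < p.length), IsWalk E l p[i + d] c →
      IsWalk E ((p.drop i).take d ++ l) (p[i]'(by omega)) c ∧
        walkLen w ((p.drop i).take d ++ l) = walkLen w l := by
  induction d with
  | zero => exact fun i _ hl => ⟨hl, rfl⟩
  | succ d ih =>
    intro i hd hl
    have hsplit : (p.drop i).take (d + 1) = p[i] :: (p.drop (i + 1)).take d := by
      rw [List.drop_eq_getElem_cons (by omega), List.take_succ_cons]
    obtain ⟨hwalk, hlen⟩ := ih (i + 1) (by omega)
      (by simpa only [Nat.add_right_comm, Nat.add_assoc] using hl)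
    obtain ⟨hwalk', hlen'⟩ :=
      hwalk.cons (w := w) (List.isChain_iff_getElem.mp hch i (by omega))
    rw [hsplit, List.cons_append]
    exact ⟨hwalk', by rw [hlen', hlen, hzero i (by omega), zero_add]⟩

lemma IsWalk.idxOf_segment_append [DecidableEq V] (hw : ∀ x y, 0 ≤ w x y) {p : List V}
    (hch : p.IsChain E) (hp : walkLen w p = 0) {l : List V} {b u c : V} (hu : u ∈ p)
    (hbu : p.idxOf b ≤ p.idxOf u) (hl : IsWalk E l u c) :
    IsWalk E ((p.drop (p.idxOf b)).take (p.idxOf u - p.idxOf b) ++ l) b c ∧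
      walkLen w ((p.drop (p.idxOf b)).take (p.idxOf u - p.idxOf b) ++ l) = walkLen w l := by
  have hu' : p.idxOf u < p.length := List.idxOf_lt_length_iff.mpr hu
  have hb' : p.idxOf b < p.length := by omega
  have hsum : p.idxOf b + (p.idxOf u - p.idxOf b) = p.idxOf u := by omega
  have := IsWalk.segment_append hch (weight_eq_zero_of_walkLen_eq_zero hw hp)
    (p.idxOf u - p.idxOf b) (p.idxOf b) (by omega)
    (by simpa only [hsum, List.getElem_idxOf] using hl)
  rwa [List.getElem_idxOf hb'] at this

end Walks

lemma IsDFirst.eq_of_idxOf_le {V : Type*} [DecidableEq V] {E : V → V → Prop}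
    {w : V → V → ℝ} {v : V} {q : List V} {β : ℝ} {b c : V} (hb : IsDFirst E w v q β b)
    (hc : c ∈ q) (hwalk : ∃ l, IsWalk E l v c ∧ walkLen w l ≤ β)
    (hcb : q.idxOf c ≤ q.idxOf b) : c = b :=
  (List.idxOf_inj hc).mp (le_antisymm hcb (hb.2.2 c hc hwalk))

theorem stmt_6_general {V : Type*} [DecidableEq V] (E : V → V → Prop)
    (w : V → V → ℝ) (hw : ∀ x y, 0 ≤ w x y)
    (p₂ p₁ : List V) (hp₂ch : p₂.Chain' E)
    (hp₂len : walkLen w p₂ = 0)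
    (β : ℝ)
    (b bf : V) (hb : b ∈ p₂) (hbf : IsDFirst E w b p₁ β bf) :
    ∃ u, MaximalPair E w p₂ p₁ β u bf ∧ p₂.idxOf b ≤ p₂.idxOf u ∧
      ∃ l, IsWalk E l u bf ∧ walkLen w l ≤ β ∧
        IsWalk E ((p₂.drop (p₂.idxOf b)).take (p₂.idxOf u - p₂.idxOf b) ++ l) b bf ∧
        walkLen w ((p₂.drop (p₂.idxOf b)).take (p₂.idxOf u - p₂.idxOf b) ++ l) ≤ β := by
  classical
  let cand : V → Prop := fun v => p₂.idxOf b ≤ p₂.idxOf v ∧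
    ∃ c, IsDFirst E w v p₁ β c ∧ p₁.idxOf c ≤ p₁.idxOf bf
  obtain ⟨u, hu, hmax⟩ := Finset.exists_max_image (p₂.toFinset.filter cand) p₂.idxOf
    ⟨b, by simpa [cand] using ⟨hb, bf, hbf, le_rfl⟩⟩
  obtain ⟨hu₂, hbu, c, ⟨hc₁, ⟨l, hl, hlβ⟩, hcmin⟩, hcbf⟩ := by simpa [cand] using hu
  obtain ⟨hwalk, hlen⟩ := hl.idxOf_segment_append hw hp₂ch hp₂len hu₂ hbu
  obtain rfl : c = bf := hbf.eq_of_idxOf_le hc₁ ⟨_, hwalk, hlen ▸ hlβ⟩ hcbf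
  refine ⟨u, ⟨hu₂, ⟨hc₁, ⟨l, hl, hlβ⟩, hcmin⟩, ?_⟩, hbu, l, hl, hlβ, hwalk, hlen ▸ hlβ⟩
  rintro ⟨u', uf', hu'₂, hlt, hdf, hle⟩
  have := hmax u' (by simpa [cand] using ⟨hu'₂, by omega, uf', hdf, hle⟩)
  omega

/-- Every vertex `b` of `P₂` with `b_f` defined admits a maximal pair
`(u, u_f) ∈ B` with `b ≤_{P₂} u` and `u_f = b_f`; consequently the subpath `P₂[b,u]`
followed by a walk from `u` to `u_f` of length at most `β` is a walk from `b` to `b_f`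
of length at most `β`. -/
theorem stmt_6 {V : Type*} [Fintype V] [DecidableEq V] (E : V → V → Prop)
    (w : V → V → ℝ) (hw : ∀ x y, 0 ≤ w x y)
    (p₂ p₁ : List V) (hp₂nd : p₂.Nodup) (hp₂ch : p₂.Chain' E)
    (hp₂len : walkLen w p₂ = 0) (hp₁nd : p₁.Nodup)
    (hdisj : ∀ x ∈ p₁, x ∉ p₂)
    (hnoout : ∀ x ∈ p₁, ∀ y, ¬ E x y)
    (hhead : ∀ x y, E x y → y ∈ p₂ → ∃ i, p₂[i]? = some x ∧ p₂[i+1]? = some y)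
    (β : ℝ) (hβ : 0 < β)
    (b bf : V) (hb : b ∈ p₂) (hbf : IsDFirst E w b p₁ β bf) :
    ∃ u, MaximalPair E w p₂ p₁ β u bf ∧ p₂.idxOf b ≤ p₂.idxOf u ∧
      ∃ l, IsWalk E l u bf ∧ walkLen w l ≤ β ∧
        IsWalk E ((p₂.drop (p₂.idxOf b)).take (p₂.idxOf u - p₂.idxOf b) ++ l) b bf ∧
        walkLen w ((p₂.drop (p₂.idxOf b)).take (p₂.idxOf u - p₂.idxOf b) ++ l) ≤ β :=
  stmt_6_general E w hw p₂ p₁ hp₂ch hp₂len β b bf hb hbf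
end

section
/- Let G be a finite directed graph with nonnegative edge weights, let γ > 0 and ε > 0, and let f be a vertex. Let A₁, …, A_t be walks with no repeated vertices, where each A_i is a shortest walk from a vertex a_i to a vertex b_i of length at most γ, and suppose f lies on every A_i. For i < j, let z_{ij} be the first vertex of A_j (in the order along A_j) that lies on A_i, and suppose that for all i < j the concatenation of A_j[a_j, z_{ij}] with A_i[z_{ij}, b_i] has length greater than (1+ε)γ. Then t ≤ 1/ε + 1. -/
/-- A shortest walk from `u` to `v`. -/
def IsShortestWalk {V : Type*} (E : V → V → Prop) (w : V → V → ℝ)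
    (l : List V) (u v : V) : Prop :=
  IsWalk E l u v ∧ ∀ l', IsWalk E l' u v → walkLen w l ≤ walkLen w l'

/-- The sub-walk of the (duplicate-free) walk `l` from the occurrence of `x` to the
occurrence of `y` (for `x` occurring no later than `y`). -/
def subwalk {V : Type*} [DecidableEq V] (l : List V) (x y : V) : List V :=
  (l.drop (l.idxOf x)).take (l.idxOf y - l.idxOf x + 1)

section

variable {V : Type*} {E : V → V → Prop} {w : V → V → ℝ}

def edgeWeights (w : V → V → ℝ) (l : List V) : List ℝ :=
  List.zipWith w l l.tail

theorem walkLen_eq_sum_edgeWeights (l : List V) : walkLen w l = (edgeWeights w l).sum := by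
  rw [walkLen, List.map_zip_eq_zipWith]; rfl

theorem edgeWeights_take_succ (l : List V) (m : ℕ) :
    edgeWeights w (l.take (m + 1)) = (edgeWeights w l).take m := by
  induction l generalizing m with
  | nil => simp [edgeWeights]
  | cons a l ih =>
    cases l with
    | nil => cases m <;> simp [edgeWeights]
    | cons b l => cases m <;> simp_all [edgeWeights]

theorem edgeWeights_drop (l : List V) (i : ℕ) :
    edgeWeights w (l.drop i) = (edgeWeights w l).drop i := by
  simp [edgeWeights, List.drop_zipWith, List.tail_drop]

theorem walkLen_nonneg (hw : ∀ x y, 0 ≤ w x y) (l : List V) : 0 ≤ walkLen w l := by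
  refine List.sum_nonneg fun c hc => ?_
  obtain ⟨q, -, rfl⟩ := List.mem_map.1 hc
  exact hw q.1 q.2

theorem walkLen_append_cons (p q : List V) (x : V) :
    walkLen w (p ++ x :: q) = walkLen w (p ++ [x]) + walkLen w (x :: q) := by
  simp only [walkLen_eq_sum_edgeWeights]
  induction p with
  | nil => simp [edgeWeights]
  | cons a p ih => cases p <;> simp_all [edgeWeights, add_assoc]

theorem walkLen_append_tail {p q : List V} {x : V} (hp : p.getLast? = some x)
    (hq : q.head? = some x) : walkLen w (p ++ q.tail) = walkLen w p + walkLen w q := by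
  obtain ⟨p, rfl⟩ := List.getLast?_eq_some_iff.1 hp
  obtain ⟨q, rfl⟩ := List.head?_eq_some_iff.1 hq
  simpa using walkLen_append_cons p q x

theorem IsWalk.append_s14 {p q : List V} {u x v : V} (hp : IsWalk E p u x) (hq : IsWalk E q x v) :
    IsWalk E (p ++ q.tail) u v := by
  obtain ⟨hp0, hpu, hpx, hpc⟩ := hp
  obtain ⟨-, hqx, hqv, hqc⟩ := hq
  obtain ⟨p, rfl⟩ := List.getLast?_eq_some_iff.1 hpx
  obtain ⟨q, rfl⟩ := List.head?_eq_some_iff.1 hqx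
  refine ⟨by simp, by simpa using hpu, ?_, ?_⟩
  · cases q with
    | nil => simpa using hqv
    | cons y q => simpa [List.getLast?_cons] using hqv
  · rw [List.append_assoc, List.singleton_append]
    exact List.isChain_append.2 ⟨List.isChain_append.1 hpc |>.1, hqc, by simpa using
      (List.isChain_append.1 hpc).2.2⟩

theorem IsWalk.head_mem {l : List V} {u v : V} (h : IsWalk E l u v) : u ∈ l :=
  List.mem_of_mem_head? h.2.1

theorem IsWalk.last_mem {l : List V} {u v : V} (h : IsWalk E l u v) : v ∈ l :=
  List.mem_of_mem_getLast? h.2.2.1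

variable [DecidableEq V]

theorem walkLen_subwalk (l : List V) (x y : V) :
    walkLen w (subwalk l x y) =
      (((edgeWeights w l).drop (l.idxOf x)).take (l.idxOf y - l.idxOf x)).sum := by
  rw [walkLen_eq_sum_edgeWeights, subwalk, edgeWeights_take_succ, edgeWeights_drop]

theorem walkLen_subwalk_add {l : List V} {x y z : V} (hxy : l.idxOf x ≤ l.idxOf y)
    (hyz : l.idxOf y ≤ l.idxOf z) :
    walkLen w (subwalk l x y) + walkLen w (subwalk l y z) = walkLen w (subwalk l x z) := by
  rw [walkLen_subwalk, walkLen_subwalk, walkLen_subwalk,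
    show l.idxOf z - l.idxOf x = (l.idxOf y - l.idxOf x) + (l.idxOf z - l.idxOf y) by omega,
    List.take_add, List.drop_drop, List.sum_append, Nat.add_sub_cancel' hxy]

theorem IsWalk.idxOf_head {l : List V} {u v : V} (h : IsWalk E l u v) : l.idxOf u = 0 := by
  obtain ⟨l, rfl⟩ := List.head?_eq_some_iff.1 h.2.1
  exact List.idxOf_cons_self

theorem IsWalk.idxOf_last {l : List V} {u v : V} (h : IsWalk E l u v) (hnd : l.Nodup) :
    l.idxOf v = l.length - 1 := by
  obtain ⟨l, rfl⟩ := List.getLast?_eq_some_iff.1 h.2.2.1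
  have hv : v ∉ l := fun hv => List.disjoint_of_nodup_append hnd hv (List.mem_singleton_self v)
  simp [List.idxOf_append_of_notMem hv]

theorem IsWalk.idxOf_le_idxOf_last {l : List V} {u v x : V} (h : IsWalk E l u v)
    (hnd : l.Nodup) (hx : x ∈ l) : l.idxOf x ≤ l.idxOf v := by
  have := List.idxOf_lt_length_iff.2 hx
  rw [h.idxOf_last hnd]
  omega

theorem IsWalk.subwalk_eq_self {l : List V} {u v : V} (h : IsWalk E l u v) (hnd : l.Nodup) :
    subwalk l u v = l := by
  have := List.length_pos_iff.2 h.1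
  rw [subwalk, h.idxOf_head, h.idxOf_last hnd, List.drop_zero]
  exact List.take_of_length_le (by omega)

theorem IsWalk.subwalk {l : List V} {x y : V} (hc : l.IsChain E) (hx : x ∈ l) (hy : y ∈ l)
    (hxy : l.idxOf x ≤ l.idxOf y) : IsWalk E (subwalk l x y) x y := by
  refine ⟨?_, ?_, ?_, (hc.drop _).take _⟩
  · simpa [_root_.subwalk] using List.idxOf_lt_length_iff.2 hx
  · simp [_root_.subwalk, List.head?_take, List.head?_drop, List.getElem?_idxOf hx]
  · rw [_root_.subwalk, List.getLast?_take]
    simp [Nat.add_sub_cancel' hxy, List.getElem?_idxOf hy]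

theorem IsShortestWalk.walkLen_subwalk_le {l m : List V} {u v x y : V}
    (hs : IsShortestWalk E w l u v) (hnd : l.Nodup) (hx : x ∈ l) (hy : y ∈ l)
    (hxy : l.idxOf x ≤ l.idxOf y) (hm : IsWalk E m x y) :
    walkLen w (subwalk l x y) ≤ walkLen w m := by
  obtain ⟨hl, hmin⟩ := hs
  have hu : l.idxOf u ≤ l.idxOf x := by rw [hl.idxOf_head]; exact Nat.zero_le _
  have hv := hl.idxOf_le_idxOf_last hnd hy
  have hpre := IsWalk.subwalk hl.2.2.2 hl.head_mem hx hu
  have hsuf := IsWalk.subwalk hl.2.2.2 hy hl.last_mem hv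
  have hdetour := hm.append_s14 hsuf
  have hlen := hmin _ (hpre.append_s14 hdetour)
  rw [walkLen_append_tail hpre.2.2.1 hdetour.2.1, walkLen_append_tail hm.2.2.1 hsuf.2.1] at hlen
  have hsplit : walkLen w (subwalk l u x) + (walkLen w (subwalk l x y) +
      walkLen w (subwalk l y v)) = walkLen w l := by
    rw [walkLen_subwalk_add hxy hv, walkLen_subwalk_add hu (hxy.trans hv),
      hl.subwalk_eq_self hnd]
  linarith

theorem walkLen_subwalk_add_subwalk_le (hw : ∀ x y, 0 ≤ w x y) {p q : List V}
    {u v u' v' x z : V} (hp : IsWalk E p u v) (hq : IsShortestWalk E w q u' v') (hqn : q.Nodup)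
    (hxp : x ∈ p) (hxq : x ∈ q) (hzp : z ∈ p) (hzq : z ∈ q)
    (hzx : p.idxOf z ≤ p.idxOf x) :
    walkLen w (subwalk p u z) + walkLen w (subwalk q z v') ≤
      walkLen w (subwalk p u x) + walkLen w (subwalk q x v') := by
  have hu : p.idxOf u ≤ p.idxOf z := by rw [hp.idxOf_head]; exact Nat.zero_le _
  rw [← walkLen_subwalk_add hu hzx]
  rcases le_total (q.idxOf x) (q.idxOf z) with hxz | hzx'
  · rw [← walkLen_subwalk_add hxz (hq.1.idxOf_le_idxOf_last hqn hzq)]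
    linarith [walkLen_nonneg hw (subwalk p z x), walkLen_nonneg hw (subwalk q x z)]
  · rw [← walkLen_subwalk_add hzx' (hq.1.idxOf_le_idxOf_last hqn hxq)]
    linarith [hq.walkLen_subwalk_le hqn hzq hxq hzx' (IsWalk.subwalk hp.2.2.2 hzp hxp hzx)]

end

theorem add_val_mul_le_of_add_le_succ {n : ℕ} {X : Fin (n + 1) → ℝ} {δ : ℝ}
    (h : ∀ i : Fin n, X i.castSucc + δ ≤ X i.succ) (i : Fin (n + 1)) :
    X 0 + i * δ ≤ X i := by
  induction i using Fin.induction with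
  | zero => simp
  | succ i ih =>
    have := h i
    push_cast [Fin.val_succ, Fin.val_castSucc] at ih ⊢
    linarith

theorem stmt_14_general {V : Type*} [DecidableEq V] (E : V → V → Prop)
    (w : V → V → ℝ) (hw : ∀ x y, 0 ≤ w x y)
    (γ ε : ℝ) (hγ : 0 < γ) (hε : 0 < ε) (f : V)
    (t : ℕ) (A : Fin t → List V) (a b : Fin t → V)
    (hnd : ∀ i, (A i).Nodup)
    (hshort : ∀ i, IsShortestWalk E w (A i) (a i) (b i))
    (hlen : ∀ i, walkLen w (A i) ≤ γ)
    (hf : ∀ i, f ∈ A i)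
    (hbad : ∀ i j : Fin t, i < j → ∀ z : V,
      z ∈ A j → z ∈ A i →
      (∀ z' ∈ A j, z' ∈ A i → (A j).idxOf z ≤ (A j).idxOf z') →
      (1 + ε) * γ <
        walkLen w (subwalk (A j) (a j) z) + walkLen w (subwalk (A i) z (b i))) :
    (t : ℝ) ≤ 1 / ε + 1 := by
  obtain _ | n := t
  · simp only [CharP.cast_eq_zero]; positivity
  set X : Fin (n + 1) → ℝ := fun i => walkLen w (subwalk (A i) (a i) f)
  set Y : Fin (n + 1) → ℝ := fun i => walkLen w (subwalk (A i) f (b i))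
  have hXY : ∀ i, X i + Y i ≤ γ := fun i => by
    have ha : (A i).idxOf (a i) ≤ (A i).idxOf f := by
      rw [(hshort i).1.idxOf_head]; exact Nat.zero_le _
    rw [walkLen_subwalk_add ha ((hshort i).1.idxOf_le_idxOf_last (hnd i) (hf i)),
      (hshort i).1.subwalk_eq_self (hnd i)]
    exact hlen i
  have hgap : ∀ i j, i < j → X i + ε * γ ≤ X j := by
    intro i j hij
    obtain ⟨z, hz, hfirst⟩ := ((A j).toFinset.filter (· ∈ A i)).exists_min_image
      (A j).idxOf ⟨f, by simp [hf]⟩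
    simp only [Finset.mem_filter, List.mem_toFinset, and_imp] at hz hfirst
    have hlong := hbad i j hij z hz.1 hz.2 hfirst
    have hdetour := walkLen_subwalk_add_subwalk_le hw (hshort j).1 (hshort i) (hnd i)
      (hf j) (hf i) hz.1 hz.2 (hfirst f (hf j) (hf i))
    linarith [hXY i]
  have hspread := add_val_mul_le_of_add_le_succ
    (fun i => hgap _ _ (Fin.castSucc_lt_succ (i := i))) (Fin.last n)
  have hn : (n : ℝ) * ε ≤ 1 := by
    refine le_of_mul_le_mul_right ?_ hγ
    simp only [Fin.val_last] at hspread
    linarith [hXY (Fin.last n), walkLen_nonneg hw (subwalk (A 0) (a 0) f),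
      walkLen_nonneg hw (subwalk (A (Fin.last n)) f (b (Fin.last n)))]
  rw [← le_div_iff₀ hε] at hn
  push_cast
  linarith

/-- If `A₁, …, A_t` are duplicate-free shortest walks of length at most
`γ`, all through the vertex `f`, and for all `i < j` the concatenation of `A_j` up to
the first vertex `z` of `A_j` lying on `A_i` with the portion of `A_i` from `z` onward
is longer than `(1+ε)γ`, then `t ≤ 1/ε + 1`. -/
theorem stmt_14 {V : Type*} [Fintype V] [DecidableEq V] (E : V → V → Prop)
    (w : V → V → ℝ) (hw : ∀ x y, 0 ≤ w x y)
    (γ ε : ℝ) (hγ : 0 < γ) (hε : 0 < ε) (f : V)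
    (t : ℕ) (A : Fin t → List V) (a b : Fin t → V)
    (hnd : ∀ i, (A i).Nodup)
    (hshort : ∀ i, IsShortestWalk E w (A i) (a i) (b i))
    (hlen : ∀ i, walkLen w (A i) ≤ γ)
    (hf : ∀ i, f ∈ A i)
    (hbad : ∀ i j : Fin t, i < j → ∀ z : V,
      z ∈ A j → z ∈ A i →
      (∀ z' ∈ A j, z' ∈ A i → (A j).idxOf z ≤ (A j).idxOf z') →
      (1 + ε) * γ <
        walkLen w (subwalk (A j) (a j) z) + walkLen w (subwalk (A i) z (b i))) :
    (t : ℝ) ≤ 1 / ε + 1 :=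
  stmt_14_general E w hw γ ε hγ hε f t A a b hnd hshort hlen hf hbad
end
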